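/- arXiv:1106.2845 — 4 statements merged into one kernel-verified Lean document; each statement's English description precedes it below -/
import Mathlib

section
/- Let 0 < s < 1 and let A : 𝓑 → ℝ be bounded and continuous. Define the operator 𝒯_{s,A} on the space of bounded continuous real functions on 𝓑 by 𝒯_{s,A}(u)(x) = log ∫_M e^{A(ax) + s·u(ax)} da. Then 𝒯_{s,A} is a uniform contraction for the supremum norm: for all bounded continuous u₁, u₂ : 𝓑 → ℝ, ‖𝒯_{s,A}(u₁) − 𝒯_{s,A}(u₂)‖_∞ ≤ s·‖u₁ − u₂‖_∞. -/
open MeasureTheory Filter Topology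

noncomputable section

instance : Fact (0 < 2 * Real.pi) := ⟨by positivity⟩

/-- The circle `M = ℝ/2πℤ` with arc-length metric. -/
abbrev Circ : Type := AddCircle (2 * Real.pi)

/-- The normalized Haar (Lebesgue) probability measure on the circle. -/
def haarC : Measure Circ := AddCircle.haarAddCircle

/-- The Bernoulli space `𝓑 = M^ℕ`. -/
abbrev Bs : Type := ℕ → Circ

/-- The left shift `σ`. -/
def shift (x : Bs) : Bs := fun n => x (n + 1)

/-- Prepending a symbol: `cons a x = ax = (a, x₀, x₁, …)`. -/
def cons (a : Circ) (x : Bs) : Bs := fun n =>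
  match n with
  | 0 => a
  | k + 1 => x k

/-- The metric `d(x,y) = Σ_k 2^{-k} d_M(x_k, y_k)` on `𝓑`. -/
def dB (x y : Bs) : ℝ := ∑' k : ℕ, (1 / 2 : ℝ) ^ k * dist (x k) (y k)

/-- `A` is α-Hölder with constant `H` for the metric `dB`. -/
def IsHolderB (α H : ℝ) (A : Bs → ℝ) : Prop := ∀ x y, |A x - A y| ≤ H * dB x y ^ α

/-- The Ruelle operator `L_A ψ (x) = ∫_M e^{A(ax)} ψ(ax) da`. -/
def Ruelle (A : Bs → ℝ) (ψ : Bs → ℝ) : Bs → ℝ :=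
  fun x => ∫ a, Real.exp (A (cons a x)) * ψ (cons a x) ∂haarC

/-- The operator `𝒯_{s,A} u (x) = log ∫_M e^{A(ax) + s u(ax)} da`. -/
def Tcal (s : ℝ) (A u : Bs → ℝ) : Bs → ℝ :=
  fun x => Real.log (∫ a, Real.exp (A (cons a x) + s * u (cons a x)) ∂haarC)

instance : IsProbabilityMeasure haarC := by unfold haarC; infer_instance

lemma cons_cont (x : Bs) : Continuous (fun a => cons a x) := by
  apply continuous_pi
  intro n
  cases n with
  | zero => exact continuous_id
  | succ k => exact continuous_const

lemma integrable_exp (s : ℝ) (A u : Bs → ℝ) (hAc : Continuous A) (huc : Continuous u) (x : Bs) :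
    Integrable (fun a => Real.exp (A (cons a x) + s * u (cons a x))) haarC := by
  have hc : Continuous (fun a => Real.exp (A (cons a x) + s * u (cons a x))) :=
    Real.continuous_exp.comp ((hAc.comp (cons_cont x)).add
      (continuous_const.mul (huc.comp (cons_cont x))))
  have hcs : HasCompactSupport (fun a => Real.exp (A (cons a x) + s * u (cons a x))) :=
    HasCompactSupport.of_compactSpace _
  exact hc.integrable_of_hasCompactSupport hcs

lemma int_pos (s : ℝ) (hs0 : 0 < s) (A u : Bs → ℝ)
    (hAc : Continuous A) (hAb : ∃ C, ∀ x, |A x| ≤ C)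
    (huc : Continuous u) (hub : ∃ C, ∀ x, |u x| ≤ C) (x : Bs) :
    0 < ∫ a, Real.exp (A (cons a x) + s * u (cons a x)) ∂haarC := by
  obtain ⟨CA, hCA⟩ := hAb
  obtain ⟨Cu, hCu⟩ := hub
  have hle : ∀ a : Circ, Real.exp (-(CA + s * Cu)) ≤
      Real.exp (A (cons a x) + s * u (cons a x)) := by
    intro a
    apply Real.exp_le_exp.2
    have h1 : -CA ≤ A (cons a x) := neg_le_of_abs_le (hCA _)
    have h2 : -Cu ≤ u (cons a x) := neg_le_of_abs_le (hCu _)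
    nlinarith
  calc (0:ℝ) < Real.exp (-(CA + s * Cu)) := Real.exp_pos _
  _ = ∫ _ : Circ, Real.exp (-(CA + s * Cu)) ∂haarC := by simp
  _ ≤ _ := integral_mono (integrable_const _) (integrable_exp s A u hAc huc x) hle

lemma key (s : ℝ) (hs0 : 0 < s) (A u₁ u₂ : Bs → ℝ)
    (hAc : Continuous A) (hAb : ∃ C, ∀ x, |A x| ≤ C)
    (hu₁c : Continuous u₁) (hu₁b : ∃ C, ∀ x, |u₁ x| ≤ C)
    (hu₂c : Continuous u₂) (hu₂b : ∃ C, ∀ x, |u₂ x| ≤ C)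
    (D : ℝ) (hD : ∀ y, u₁ y - u₂ y ≤ D) (x : Bs) :
    Tcal s A u₁ x - Tcal s A u₂ x ≤ s * D := by
  have hf₁ := integrable_exp s A u₁ hAc hu₁c x
  have hf₂ := integrable_exp s A u₂ hAc hu₂c x
  have hI₁pos := int_pos s hs0 A u₁ hAc hAb hu₁c hu₁b x
  have hI₂pos := int_pos s hs0 A u₂ hAc hAb hu₂c hu₂b x
  have hIle : ∫ a, Real.exp (A (cons a x) + s * u₁ (cons a x)) ∂haarC ≤
      Real.exp (s * D) * ∫ a, Real.exp (A (cons a x) + s * u₂ (cons a x)) ∂haarC := by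
    rw [← integral_const_mul]
    apply integral_mono hf₁ (hf₂.const_mul _)
    intro a
    simp only []
    rw [← Real.exp_add]
    apply Real.exp_le_exp.2
    have := hD (cons a x)
    nlinarith
  have hlog := Real.log_le_log hI₁pos hIle
  rw [Real.log_mul (Real.exp_pos _).ne' hI₂pos.ne', Real.log_exp] at hlog
  simp only [Tcal]
  linarith

/-- for `0 < s < 1`, `𝒯_{s,A}` is a uniform contraction of ratio `s`
for the supremum norm on bounded continuous functions. -/
theorem contraction_Tcal (s : ℝ) (hs0 : 0 < s) (hs1 : s < 1)
    (A : Bs → ℝ) (hAc : Continuous A) (hAb : ∃ C, ∀ x, |A x| ≤ C)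
    (u₁ u₂ : Bs → ℝ)
    (hu₁c : Continuous u₁) (hu₁b : ∃ C, ∀ x, |u₁ x| ≤ C)
    (hu₂c : Continuous u₂) (hu₂b : ∃ C, ∀ x, |u₂ x| ≤ C) :
    (⨆ x : Bs, |Tcal s A u₁ x - Tcal s A u₂ x|) ≤ s * ⨆ x : Bs, |u₁ x - u₂ x| := by
  set D := ⨆ x : Bs, |u₁ x - u₂ x| with hDdef
  obtain ⟨C1, hC1⟩ := hu₁b
  obtain ⟨C2, hC2⟩ := hu₂b
  have hbdd : BddAbove (Set.range fun x : Bs => |u₁ x - u₂ x|) := by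
    refine ⟨C1 + C2, ?_⟩
    rintro _ ⟨y, rfl⟩
    calc |u₁ y - u₂ y| ≤ |u₁ y| + |u₂ y| := abs_sub _ _
    _ ≤ C1 + C2 := add_le_add (hC1 y) (hC2 y)
  have hDle : ∀ y, |u₁ y - u₂ y| ≤ D := fun y => le_ciSup hbdd y
  apply ciSup_le
  intro x
  rw [abs_le]
  constructor
  · have h := key s hs0 A u₂ u₁ hAc hAb hu₂c ⟨C2, hC2⟩ hu₁c ⟨C1, hC1⟩ D
      (fun y => (le_abs_self _).trans ((abs_sub_comm _ _).le.trans (hDle y))) x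
    linarith
  · exact key s hs0 A u₁ u₂ hAc hAb hu₁c ⟨C1, hC1⟩ hu₂c ⟨C2, hC2⟩ D
      (fun y => (le_abs_self _).trans (hDle y)) x
end
end

section
/- Let 0 < α ≤ 1 and let A : 𝓑 → ℝ be α-Hölder with constant H. For each 0 < s < 1, let u_s be the unique bounded continuous function satisfying u_s(x) = log ∫_M e^{A(ax) + s·u_s(ax)} da for all x ∈ 𝓑 (the fixed point of the contraction 𝒯_{s,A}). Then for every s ∈ (0,1) and all x, y ∈ 𝓑, |u_s(x) − u_s(y)| ≤ (2^α/(2^α − 1))·H·d(x,y)^α. In particular the family {u_s : 0 < s < 1} is equicontinuous, with a Hölder constant independent of s. -/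
open MeasureTheory Filter Topology

noncomputable section

/-!
Write `K = 2^α/(2^α - 1)·H`. Since `d(ax, ay) = d(x, y)/2`, if a continuous `u` satisfies
`|u x - u y| ≤ K d(x,y)^α + c`, then the exponents `A(ax) + s u(ax)` and `A(ay) + s u(ay)` differ by
at most `(H + sK)(d/2)^α + sc ≤ K d^α + sc`, and `log ∫ exp` is monotone and commutes with adding
constants, so `𝒯_{s,A} u` satisfies the same bound with `c` replaced by `sc`. For the fixed point
this bootstraps from `c = 2‖u‖_∞` to `c = 2 sⁿ ‖u‖_∞` for every `n`.
-/

open Real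

instance inst_s1 : IsProbabilityMeasure haarC :=
  inferInstanceAs (IsProbabilityMeasure AddCircle.haarAddCircle)

theorem log_integral_exp_le_add {X : Type*} [MeasurableSpace X] {μ : Measure X} [NeZero μ]
    {f g : X → ℝ} {B : ℝ} (hf : Integrable (fun a => exp (f a)) μ)
    (hg : Integrable (fun a => exp (g a)) μ) (hfg : ∀ a, f a ≤ g a + B) :
    log (∫ a, exp (f a) ∂μ) ≤ log (∫ a, exp (g a) ∂μ) + B := by
  have hmono : ∫ a, exp (f a) ∂μ ≤ (∫ a, exp (g a) ∂μ) * exp B := by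
    rw [← integral_mul_const]
    refine integral_mono hf (hg.mul_const _) fun a => ?_
    simpa only [← exp_add] using exp_le_exp.2 (hfg a)
  calc log (∫ a, exp (f a) ∂μ) ≤ log ((∫ a, exp (g a) ∂μ) * exp B) :=
        log_le_log (integral_exp_pos hf) hmono
    _ = log (∫ a, exp (g a) ∂μ) + B := by
        rw [log_mul (integral_exp_pos hg).ne' (exp_ne_zero B), log_exp]

theorem continuous_of_abs_sub_le_mul_rpow {X : Type*} [PseudoMetricSpace X] {f : X → ℝ}
    {α H : ℝ} (hα : 0 < α) (hf : ∀ a b, |f a - f b| ≤ H * dist a b ^ α) : Continuous f := by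
  refine continuous_iff_continuousAt.2 fun b => tendsto_iff_dist_tendsto_zero.2 ?_
  have hlim : Tendsto (fun a => H * dist a b ^ α) (𝓝 b) (𝓝 (H * dist b b ^ α)) :=
    ((continuous_id.dist continuous_const).rpow_const fun _ => Or.inr hα.le).const_mul H
      |>.tendsto b
  rw [dist_self, zero_rpow hα.ne', mul_zero] at hlim
  exact squeeze_zero (fun _ => dist_nonneg) (fun a => (Real.dist_eq _ _).trans_le (hf a b)) hlim

theorem le_of_forall_le_add_pow_mul {a b c s : ℝ} (hs0 : 0 ≤ s) (hs1 : s < 1)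
    (h : ∀ n : ℕ, a ≤ b + s ^ n * c) : a ≤ b := by
  have hlim : Tendsto (fun n : ℕ => b + s ^ n * c) atTop (𝓝 (b + 0 * c)) :=
    ((tendsto_pow_atTop_nhds_zero_of_lt_one hs0 hs1).mul_const c).const_add b
  simpa using ge_of_tendsto' hlim h

theorem integrable_haarC {f : Circ → ℝ} (hf : Continuous f) : Integrable f haarC :=
  hf.integrable_of_hasCompactSupport (HasCompactSupport.of_compactSpace f)

theorem continuous_cons_left (x : Bs) : Continuous fun a => cons a x :=
  continuous_pi fun
    | 0 => continuous_id
    | _ + 1 => continuous_const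

theorem summable_dB (x y : Bs) : Summable fun k => (1 / 2 : ℝ) ^ k * dist (x k) (y k) :=
  (summable_geometric_two.mul_right (Metric.diam (Set.univ : Set Circ))).of_nonneg_of_le
    (fun _ => by positivity) fun _ => mul_le_mul_of_nonneg_left
      (Metric.dist_le_diam_of_mem isCompact_univ.isBounded trivial trivial) (by positivity)

theorem dB_nonneg (x y : Bs) : 0 ≤ dB x y :=
  tsum_nonneg fun _ => by positivity

theorem dB_comm (x y : Bs) : dB x y = dB y x :=
  tsum_congr fun _ => by rw [dist_comm]

theorem dB_self (x : Bs) : dB x x = 0 := by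
  simp [dB]

theorem dB_cons (a b : Circ) (x y : Bs) : dB (cons a x) (cons b y) = dist a b + dB x y / 2 := by
  rw [dB, (summable_dB _ _).tsum_eq_zero_add, dB, ← tsum_div_const]
  congr 1
  · simp [cons]
  · exact tsum_congr fun k => by simp only [cons]; ring

theorem IsHolderB.nonneg {α H : ℝ} {A : Bs → ℝ} (hA : IsHolderB α H A) : 0 ≤ H := by
  set p : Circ := ((2 * π / 2 : ℝ) : Circ)
  have hd : 0 < dB (cons 0 0) (cons p 0) := by
    rw [dB_cons, dB_self, dist_zero_left, AddCircle.norm_half_period_eq]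
    positivity
  exact nonneg_of_mul_nonneg_left ((abs_nonneg _).trans (hA _ _)) (rpow_pos_of_pos hd α)

theorem IsHolderB.continuous_comp_cons {α H : ℝ} {A : Bs → ℝ} (hA : IsHolderB α H A)
    (hα : 0 < α) (x : Bs) : Continuous fun a => A (cons a x) :=
  continuous_of_abs_sub_le_mul_rpow hα fun a b => by
    simpa [dB_cons, dB_self] using hA (cons a x) (cons b x)

/-- The contraction `𝒯_{s,A}`. -/
def logTransfer (A : Bs → ℝ) (s : ℝ) (u : Bs → ℝ) (x : Bs) : ℝ :=
  log (∫ a, exp (A (cons a x) + s * u (cons a x)) ∂haarC)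

section logTransfer

variable {α H K s c : ℝ} {A u : Bs → ℝ}

theorem logTransfer_sub_le (hα : 0 < α) (hA : IsHolderB α H A) (hs : 0 ≤ s)
    (hK : H + s * K ≤ 2 ^ α * K) (hu : Continuous u)
    (huK : ∀ x y, |u x - u y| ≤ K * dB x y ^ α + c) (x y : Bs) :
    logTransfer A s u x - logTransfer A s u y ≤ K * dB x y ^ α + s * c := by
  have hint : ∀ z, Integrable (fun a => exp (A (cons a z) + s * u (cons a z))) haarC := fun z =>
    integrable_haarC ((hA.continuous_comp_cons hα z).add
      (continuous_const.mul (hu.comp (continuous_cons_left z)))).rexp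
  have hpt : ∀ a, A (cons a x) + s * u (cons a x)
      ≤ A (cons a y) + s * u (cons a y) + (K * dB x y ^ α + s * c) := by
    intro a
    have hd : dB (cons a x) (cons a y) ^ α = dB x y ^ α / 2 ^ α := by
      rw [dB_cons, dist_self, zero_add, div_rpow (dB_nonneg x y) zero_le_two]
    have hAa := (le_abs_self _).trans (hA (cons a x) (cons a y))
    have hua := (le_abs_self _).trans (huK (cons a x) (cons a y))
    rw [hd] at hAa hua
    have hKd : (H + s * K) * (dB x y ^ α / 2 ^ α) ≤ K * dB x y ^ α := by
      rw [mul_div_left_comm, ← mul_div_assoc, div_le_iff₀ (by positivity)]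
      nlinarith [rpow_nonneg (dB_nonneg x y) α]
    nlinarith [mul_le_mul_of_nonneg_left hua hs]
  have := log_integral_exp_le_add (hint x) (hint y) hpt
  unfold logTransfer
  linarith

theorem abs_logTransfer_sub_le (hα : 0 < α) (hA : IsHolderB α H A) (hs : 0 ≤ s)
    (hK : H + s * K ≤ 2 ^ α * K) (hu : Continuous u)
    (huK : ∀ x y, |u x - u y| ≤ K * dB x y ^ α + c) (x y : Bs) :
    |logTransfer A s u x - logTransfer A s u y| ≤ K * dB x y ^ α + s * c :=
  abs_sub_le_iff.2 ⟨logTransfer_sub_le hα hA hs hK hu huK x y,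
    dB_comm x y ▸ logTransfer_sub_le hα hA hs hK hu huK y x⟩

end logTransfer

def holderConst (α H : ℝ) : ℝ := 2 ^ α / (2 ^ α - 1) * H

theorem holderConst_nonneg {α H : ℝ} (hα : 0 < α) (hH : 0 ≤ H) : 0 ≤ holderConst α H := by
  have := sub_pos.2 (one_lt_rpow one_lt_two hα)
  unfold holderConst
  positivity

theorem add_mul_holderConst_le {α H s : ℝ} (hα : 0 < α) (hH : 0 ≤ H) (hs : s ≤ 1) :
    H + s * holderConst α H ≤ 2 ^ α * holderConst α H := by
  have hK := holderConst_nonneg hα hH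
  have ht : (2 : ℝ) ^ α - 1 ≠ 0 := (sub_pos.2 (one_lt_rpow one_lt_two hα)).ne'
  have hKt : 2 ^ α * holderConst α H = holderConst α H + 2 ^ α * H := by
    unfold holderConst
    field_simp
    ring
  nlinarith [one_le_rpow one_le_two hα.le]

theorem holder_bound_fixed_point_general (α H : ℝ) (hα0 : 0 < α)
    (A : Bs → ℝ) (hA : IsHolderB α H A)
    (s : ℝ) (hs0 : 0 < s) (hs1 : s < 1)
    (u : Bs → ℝ) (huc : Continuous u) (hub : ∃ C, ∀ x, |u x| ≤ C)
    (hfix : ∀ x, u x = Real.log (∫ a, Real.exp (A (cons a x) + s * u (cons a x)) ∂haarC)) :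
    ∀ x y, |u x - u y| ≤ ((2 : ℝ) ^ α / ((2 : ℝ) ^ α - 1)) * H * dB x y ^ α := by
  obtain ⟨C, hC⟩ := hub
  have hH : 0 ≤ H := hA.nonneg
  have hK := add_mul_holderConst_le hα0 hH hs1.le
  have hfixT : ∀ x, u x = logTransfer A s u x := hfix
  have hbound (n : ℕ) : ∀ x y, |u x - u y| ≤ holderConst α H * dB x y ^ α + s ^ n * (2 * C) := by
    induction n with
    | zero =>
      intro x y
      have := mul_nonneg (holderConst_nonneg hα0 hH) (rpow_nonneg (dB_nonneg x y) α)
      linarith [abs_sub (u x) (u y), hC x, hC y]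
    | succ n ih =>
      intro x y
      rw [hfixT x, hfixT y, pow_succ', mul_assoc]
      exact abs_logTransfer_sub_le hα0 hA hs0.le hK huc ih x y
  exact fun x y => le_of_forall_le_add_pow_mul hs0.le hs1 (hbound · x y)

/-- the fixed point `u_s` of the contraction `𝒯_{s,A}` is α-Hölder with
constant `(2^α/(2^α − 1))·H`, independently of `s ∈ (0,1)`. -/
theorem holder_bound_fixed_point (α H : ℝ) (hα0 : 0 < α) (hα1 : α ≤ 1)
    (A : Bs → ℝ) (hA : IsHolderB α H A)
    (s : ℝ) (hs0 : 0 < s) (hs1 : s < 1)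
    (u : Bs → ℝ) (huc : Continuous u) (hub : ∃ C, ∀ x, |u x| ≤ C)
    (hfix : ∀ x, u x = Real.log (∫ a, Real.exp (A (cons a x) + s * u (cons a x)) ∂haarC)) :
    ∀ x y, |u x - u y| ≤ ((2 : ℝ) ^ α / ((2 : ℝ) ^ α - 1)) * H * dB x y ^ α :=
  holder_bound_fixed_point_general α H hα0 A hA s hs0 hs1 u huc hub hfix
end
end

section
/- Let 0 < α ≤ 1, let A : 𝓑 → ℝ be α-Hölder, let ψ_A > 0 be a continuous eigenfunction of L_A with eigenvalue λ_A > 0, let Ā = A + log ψ_A − log ψ_A ∘ σ − log λ_A be the associated normalized potential, and let m be the unique Borel probability measure fixed by L_Ā^*. Define the finite Borel measure ρ_A on 𝓑 by ρ_A(E) = ∫_E (1/ψ_A) dm. Then ρ_A is an eigenmeasure of the dual Ruelle operator: for every bounded continuous φ : 𝓑 → ℝ, ∫ L_A(φ) dρ_A = λ_A ∫ φ dρ_A. -/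
/-!
Since `σ(ax) = x`, the factor `e^{Ā(ax)}` is `e^{A(ax)} ψ_A(ax) / (λ_A ψ_A(x))`, so
`L_Ā(φ / ψ_A) = L_A φ / (λ_A ψ_A)`. The function `φ / ψ_A` is continuous on the compact space `𝓑`,
hence bounded, and the `L_Ā^*`-invariance of `m` applied to it reads
`∫ L_A φ / ψ_A dm = λ_A ∫ φ / ψ_A dm`, which is the claim for `ρ_A = ψ_A⁻¹ m`.
-/

open MeasureTheory Filter Topology

noncomputable section

/-- `m` is a fixed point of the dual Ruelle operator `L_A^*`. -/
def FixedDual (A : Bs → ℝ) (m : Measure Bs) : Prop :=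
  ∀ ψ : Bs → ℝ, Continuous ψ → (∃ C, ∀ x, |ψ x| ≤ C) →
    ∫ x, Ruelle A ψ x ∂m = ∫ x, ψ x ∂m

/-- The normalized potential `Ā = A + log ψ_A − log ψ_A ∘ σ − log λ_A`. -/
def normPot (A ψ : Bs → ℝ) (lam : ℝ) : Bs → ℝ :=
  fun x => A x + Real.log (ψ x) - Real.log (ψ (shift x)) - Real.log lam

@[simp]
lemma shift_cons (a : Circ) (x : Bs) : shift (cons a x) = x := rfl

lemma exp_normPot_cons {A ψ : Bs → ℝ} (hψ : ∀ x, 0 < ψ x) {lam : ℝ} (hlam : 0 < lam)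
    (a : Circ) (x : Bs) :
    Real.exp (normPot A ψ lam (cons a x)) =
      Real.exp (A (cons a x)) * ψ (cons a x) / (lam * ψ x) := by
  rw [normPot, shift_cons, Real.exp_sub, Real.exp_sub, Real.exp_add, Real.exp_log (hψ _),
    Real.exp_log (hψ x), Real.exp_log hlam]
  ring

lemma ruelle_normPot_div {A ψ : Bs → ℝ} (hψ : ∀ x, 0 < ψ x) {lam : ℝ} (hlam : 0 < lam)
    (φ : Bs → ℝ) (x : Bs) :
    Ruelle (normPot A ψ lam) (fun y => φ y / ψ y) x = Ruelle A φ x / (lam * ψ x) := by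
  simp only [Ruelle, exp_normPot_cons hψ hlam, ← integral_div]
  congr 1 with a
  field_simp [(hψ (cons a x)).ne']

lemma integral_withDensity_ofReal_one_div {X : Type*} [MeasurableSpace X] (μ : Measure X)
    {ψ : X → ℝ} (hψ : Measurable ψ) (hψ0 : ∀ x, 0 ≤ ψ x) (g : X → ℝ) :
    ∫ x, g x ∂μ.withDensity (fun x => ENNReal.ofReal (1 / ψ x)) = ∫ x, g x / ψ x ∂μ := by
  rw [integral_withDensity_eq_integral_toReal_smul (by fun_prop)
    (ae_of_all _ fun _ => ENNReal.ofReal_lt_top)]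
  congr 1 with x
  rw [ENNReal.toReal_ofReal (one_div_nonneg.mpr (hψ0 x)), smul_eq_mul, one_div_mul_eq_div]

theorem eigenmeasure_dual_general
    (A : Bs → ℝ)
    (ψ : Bs → ℝ) (hψc : Continuous ψ) (hψpos : ∀ x, 0 < ψ x)
    (lam : ℝ) (hlam : 0 < lam)
    (m : Measure Bs)
    (hfix : FixedDual (normPot A ψ lam) m) :
    ∀ φ : Bs → ℝ, Continuous φ → (∃ C, ∀ x, |φ x| ≤ C) →
      ∫ x, Ruelle A φ x ∂(m.withDensity fun x => ENNReal.ofReal (1 / ψ x)) =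
        lam * ∫ x, φ x ∂(m.withDensity fun x => ENNReal.ofReal (1 / ψ x)) := by
  intro φ hφc _
  have hφψ : Continuous fun x => φ x / ψ x := hφc.div hψc fun x => (hψpos x).ne'
  obtain ⟨C, hC⟩ := isCompact_univ.exists_bound_of_continuousOn hφψ.continuousOn
  have hinv := hfix _ hφψ ⟨C, fun x => hC x trivial⟩
  simp only [ruelle_normPot_div hψpos hlam] at hinv
  have hψ0 : ∀ x, 0 ≤ ψ x := fun x => (hψpos x).le
  rw [integral_withDensity_ofReal_one_div m hψc.measurable hψ0,
    integral_withDensity_ofReal_one_div m hψc.measurable hψ0, ← hinv, ← integral_const_mul]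
  congr 1 with x
  field_simp [(hψpos x).ne']

/-- the measure `ρ_A = (1/ψ_A)·m` is an eigenmeasure of the dual Ruelle
operator: `∫ L_A φ dρ_A = λ_A ∫ φ dρ_A` for every bounded continuous `φ`. -/
theorem eigenmeasure_dual (α H : ℝ) (hα0 : 0 < α) (hα1 : α ≤ 1)
    (A : Bs → ℝ) (hA : IsHolderB α H A)
    (ψ : Bs → ℝ) (hψc : Continuous ψ) (hψpos : ∀ x, 0 < ψ x)
    (lam : ℝ) (hlam : 0 < lam) (heig : ∀ x, Ruelle A ψ x = lam * ψ x)
    (m : Measure Bs) (hm : IsProbabilityMeasure m)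
    (hfix : FixedDual (normPot A ψ lam) m)
    (hmuniq : ∀ m' : Measure Bs, IsProbabilityMeasure m' →
      FixedDual (normPot A ψ lam) m' → m' = m) :
    ∀ φ : Bs → ℝ, Continuous φ → (∃ C, ∀ x, |φ x| ≤ C) →
      ∫ x, Ruelle A φ x ∂(m.withDensity fun x => ENNReal.ofReal (1 / ψ x)) =
        lam * ∫ x, φ x ∂(m.withDensity fun x => ENNReal.ofReal (1 / ψ x)) :=
  eigenmeasure_dual_general A ψ hψc hψpos lam hlam m hfix
end
end

section
/- Let A : 𝓑 → ℝ be continuous and let m(A) = sup{ ∫ A dμ : μ a σ-invariant Borel probability measure on 𝓑 }. Then m(A) = inf_{f} sup_{(a,x) ∈ M × 𝓑} [ A(ax) + f(ax) − f(x) ], where the infimum is taken over all continuous functions f : 𝓑 → ℝ. -/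
open MeasureTheory Filter Topology

noncomputable section

/-- `m(A)`: the supremum of `∫ A dμ` over all shift-invariant Borel probability
measures `μ` on `𝓑`. -/
def mval (A : Bs → ℝ) : ℝ :=
  sSup {r : ℝ | ∃ μ : Measure Bs, IsProbabilityMeasure μ ∧ μ.map shift = μ ∧
    r = ∫ x, A x ∂μ}

/-!
Integrating `A + f - f ∘ σ` against a `σ`-invariant measure gives `∫ A`, and every point of `𝓑`
is of the form `ax`; hence `m(A)` is at most every value in the infimum. Conversely, the corrector
`fₙ = -(1/n) ∑_{j<n} S_j A` turns `A + fₙ - fₙ ∘ σ` into the Birkhoff average `Sₙ A / n`. Let `x`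
maximise `Sₙ A / n`. By uniform continuity of `A`, the periodic point repeating `x₀ … x_{n-1}` has
almost the same Birkhoff average, and that average is `∫ A` for the invariant measure
equidistributed on its orbit.
-/

open Finset Function

theorem sSup_eq_sInf_of_forall_le_of_forall_exists_le_add {S T : Set ℝ}
    (hle : ∀ s ∈ S, ∀ t ∈ T, s ≤ t) (happrox : ∀ ε > 0, ∃ s ∈ S, ∃ t ∈ T, t ≤ s + ε) :
    sSup S = sInf T := by
  obtain ⟨s₀, hs₀, t₀, ht₀, -⟩ := happrox 1 one_pos
  have hS : BddAbove S := ⟨t₀, fun s hs => hle s hs t₀ ht₀⟩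
  refine le_antisymm (le_csInf ⟨t₀, ht₀⟩ fun t ht => csSup_le ⟨s₀, hs₀⟩ fun s hs => hle s hs t ht)
    (le_of_forall_pos_le_add fun ε hε => ?_)
  obtain ⟨s, hs, t, ht, hts⟩ := happrox ε hε
  calc sInf T ≤ t := csInf_le ⟨s₀, fun t ht => hle s₀ hs₀ t ht⟩ ht
    _ ≤ s + ε := hts
    _ ≤ sSup S + ε := by gcongr; exact le_csSup hS hs

section BirkhoffSum

variable {α : Type*} (T : α → α) (g : α → ℝ)

variable {T g} in
theorem Continuous.birkhoffSum [TopologicalSpace α] (hT : Continuous T) (hg : Continuous g)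
    (n : ℕ) : Continuous (birkhoffSum T g n) :=
  continuous_finsetSum _ fun k _ => hg.comp (hT.iterate k)

theorem abs_birkhoffSum_le {C : ℝ} (hC : ∀ x, |g x| ≤ C) (n : ℕ) (x : α) :
    |birkhoffSum T g n x| ≤ n * C := by
  calc |birkhoffSum T g n x| ≤ ∑ k ∈ range n, |g (T^[k] x)| := abs_sum_le_sum_abs _ _
    _ ≤ n * C := by simpa using sum_le_card_nsmul (range n) _ C fun k _ => hC (T^[k] x)

theorem birkhoffSum_add_sub_birkhoffSum_add_le {C ε : ℝ} (hC : ∀ x, |g x| ≤ C) {a : ℕ} {x y : α}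
    (hxy : ∀ k < a, g (T^[k] x) - g (T^[k] y) ≤ ε) (b : ℕ) :
    birkhoffSum T g (a + b) x - birkhoffSum T g (a + b) y ≤ a * ε + 2 * b * C := by
  have hhead : birkhoffSum T g a x - birkhoffSum T g a y ≤ a * ε := by
    rw [birkhoffSum, birkhoffSum, ← sum_sub_distrib]
    simpa using sum_le_card_nsmul (range a) _ ε fun k hk => hxy k (mem_range.1 hk)
  have htail := abs_le.1 (abs_birkhoffSum_le T g hC b (T^[a] x))
  have htail' := abs_le.1 (abs_birkhoffSum_le T g hC b (T^[a] y))
  rw [birkhoffSum_add, birkhoffSum_add]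
  linarith [htail.2, htail'.1]

def birkhoffCorrector (n : ℕ) (x : α) : ℝ :=
  -(n : ℝ)⁻¹ * ∑ j ∈ range n, birkhoffSum T g j x

theorem add_birkhoffCorrector_sub_birkhoffCorrector_apply {n : ℕ} (hn : n ≠ 0) (x : α) :
    g x + birkhoffCorrector T g n x - birkhoffCorrector T g n (T x) =
      birkhoffAverage ℝ T g n x := by
  have hstep : ∀ j, birkhoffSum T g j (T x) - birkhoffSum T g j x =
      (birkhoffSum T g (j + 1) x - birkhoffSum T g j x) - g x := by
    intro j
    rw [birkhoffSum_succ']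
    ring
  have htelescope : ∑ j ∈ range n, birkhoffSum T g j (T x) - ∑ j ∈ range n, birkhoffSum T g j x =
      birkhoffSum T g n x - n * g x := by
    rw [← sum_sub_distrib, sum_congr rfl fun j _ => hstep j, sum_sub_distrib,
      sum_range_sub (fun j => birkhoffSum T g j x),
      birkhoffSum_zero, sum_const, card_range, nsmul_eq_mul, sub_zero]
  rw [birkhoffCorrector, birkhoffCorrector, birkhoffAverage, smul_eq_mul]
  field_simp
  linear_combination htelescope

variable {T g} in
theorem Continuous.birkhoffCorrector [TopologicalSpace α] (hT : Continuous T)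
    (hg : Continuous g) (n : ℕ) : Continuous (birkhoffCorrector T g n) :=
  continuous_const.mul (continuous_finsetSum _ fun j _ => hT.birkhoffSum hg j)

end BirkhoffSum

section OrbitMeasure

variable {α : Type*} [MeasurableSpace α] (T : α → α)

def orbitMeasure (n : ℕ) (x : α) : Measure α :=
  (n : ENNReal)⁻¹ • ∑ k ∈ range n, Measure.dirac (T^[k] x)

theorem isProbabilityMeasure_orbitMeasure {n : ℕ} (hn : n ≠ 0) (x : α) :
    IsProbabilityMeasure (orbitMeasure T n x) := by
  constructor
  simp [orbitMeasure, ENNReal.inv_mul_cancel (Nat.cast_ne_zero.2 hn)]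

variable {T} in
theorem map_orbitMeasure (hT : Measurable T) {n : ℕ} {x : α}
    (hx : IsPeriodicPt T n x) : (orbitMeasure T n x).map T = orbitMeasure T n x := by
  rcases n with _ | m
  · simp [orbitMeasure]
  rw [orbitMeasure, ← Measure.mapₗ_apply_of_measurable hT, map_smul, map_sum]
  simp_rw [Measure.mapₗ_apply_of_measurable hT, Measure.map_dirac' hT,
    ← iterate_succ_apply' T]
  refine congrArg _ ?_
  calc ∑ k ∈ range (m + 1), Measure.dirac (T^[k + 1] x)
      = ∑ k ∈ range m, Measure.dirac (T^[k + 1] x) + Measure.dirac (T^[0] x) := by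
        rw [sum_range_succ, hx.eq, iterate_zero_apply]
    _ = ∑ k ∈ range (m + 1), Measure.dirac (T^[k] x) :=
        (sum_range_succ' (fun k => Measure.dirac (T^[k] x)) m).symm

theorem integral_orbitMeasure [MeasurableSingletonClass α] (g : α → ℝ) (n : ℕ) (x : α) :
    ∫ y, g y ∂orbitMeasure T n x = birkhoffAverage ℝ T g n x := by
  rw [orbitMeasure, integral_smul_measure,
    integral_finsetSum_measure fun k _ => integrable_dirac enorm_lt_top]
  simp [birkhoffAverage, birkhoffSum, integral_dirac]

end OrbitMeasure

theorem integral_add_sub_comp_of_map_eq {α : Type*} [MeasurableSpace α] {μ : Measure α}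
    {T : α → α} (hT : Measurable T) (hμ : μ.map T = μ) {g f : α → ℝ} (hg : Integrable g μ)
    (hf : Integrable f μ) : ∫ x, (g x + f x - f (T x)) ∂μ = ∫ x, g x ∂μ := by
  have hfT : Integrable (fun x => f (T x)) μ := by
    rw [← hμ] at hf
    exact hf.comp_measurable hT
  have hfT_eq : ∫ x, f (T x) ∂μ = ∫ x, f x ∂μ := by
    conv_rhs => rw [← hμ]
    exact (integral_map hT.aemeasurable (hμ.symm ▸ hf.aestronglyMeasurable)).symm
  rw [integral_sub (f := fun x => g x + f x) (hg.add hf) hfT, integral_add hg hf, hfT_eq,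
    add_sub_cancel_right]

theorem UniformContinuous.exists_forall_dist_lt_of_forall_lt_eq {X β : Type*} [UniformSpace X]
    [PseudoMetricSpace β] {A : (ℕ → X) → β} (hA : UniformContinuous A) {ε : ℝ} (hε : 0 < ε) :
    ∃ m : ℕ, ∀ x y : ℕ → X, (∀ i < m, x i = y i) → dist (A x) (A y) < ε := by
  have hV := hA (Metric.dist_mem_uniformity hε)
  rw [Pi.uniformity, Filter.mem_map, mem_iInf] at hV
  obtain ⟨I, hI, W, hW, hV⟩ := hV
  obtain ⟨b, hb⟩ := hI.bddAbove
  refine ⟨b + 1, fun x y hxy => ?_⟩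
  suffices (x, y) ∈ ⋂ i : I, W i by rw [← hV] at this; exact this
  refine Set.mem_iInter.2 fun i => ?_
  obtain ⟨U, hU, hUW⟩ := mem_comap.1 (hW i)
  apply hUW
  change (x i, y i) ∈ U
  rw [hxy i (Nat.lt_succ_of_le (hb i.2))]
  exact refl_mem_uniformity hU

theorem cons_apply_zero_shift (y : Bs) : cons (y 0) (shift y) = y := by
  funext n
  cases n <;> rfl

theorem continuous_shift : Continuous shift :=
  continuous_pi fun n => continuous_apply (n + 1)

theorem shift_iterate_apply (k : ℕ) (x : Bs) (i : ℕ) : shift^[k] x i = x (i + k) := by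
  induction k generalizing x with
  | zero => rfl
  | succ k ih => rw [iterate_succ_apply, ih]; rfl

theorem surjective_cons_uncurry : Surjective fun p : Circ × Bs => cons p.1 p.2 :=
  fun y => ⟨(y 0, shift y), cons_apply_zero_shift y⟩

theorem iSup_cons_add_sub_eq (g f : Bs → ℝ) :
    ⨆ p : Circ × Bs, (g (cons p.1 p.2) + f (cons p.1 p.2) - f p.2) =
      ⨆ y, (g y + f y - f (shift y)) :=
  congrArg sSup <| surjective_cons_uncurry.range_comp fun y => g y + f y - f (shift y)

def periodize (n : ℕ) (x : Bs) : Bs := fun i => x (i % n)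

theorem isPeriodicPt_periodize (n : ℕ) (x : Bs) : IsPeriodicPt shift n (periodize n x) := by
  funext i
  simp [shift_iterate_apply, periodize]

theorem shift_iterate_periodize_apply {n k i : ℕ} (h : i + k < n) (x : Bs) :
    shift^[k] (periodize n x) i = shift^[k] x i := by
  simp [shift_iterate_apply, periodize, Nat.mod_eq_of_lt h]

theorem exists_birkhoffAverage_le_birkhoffAverage_periodize_add {A : Bs → ℝ} (hA : Continuous A)
    {ε : ℝ} (hε : 0 < ε) : ∃ n ≠ 0, ∀ x,
      birkhoffAverage ℝ shift A n x ≤ birkhoffAverage ℝ shift A n (periodize n x) + ε := by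
  obtain ⟨m, hm⟩ := (CompactSpace.uniformContinuous_of_continuous hA)
    |>.exists_forall_dist_lt_of_forall_lt_eq (half_pos hε)
  obtain ⟨C, hC⟩ := (isCompact_range hA).isBounded.exists_norm_le
  have hAC : ∀ x, |A x| ≤ C := fun x => hC _ ⟨x, rfl⟩
  obtain ⟨N, hN⟩ := exists_nat_gt (4 * C * m / ε)
  have hCm : 4 * C * m < N * ε := (div_lt_iff₀ hε).1 hN
  -- the first `N + 1` terms of the Birkhoff sums differ by at most `ε / 2` each, the last `m` by
  -- at most `2 * C` each, and `N` is chosen so that the latter total `2 * C * m` is below `N * ε / 2`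
  refine ⟨N + 1 + m, by omega, fun x => ?_⟩
  have hclose : ∀ k < N + 1,
      A (shift^[k] x) - A (shift^[k] (periodize (N + 1 + m) x)) ≤ ε / 2 := fun k hk =>
    (le_abs_self _).trans <| le_of_lt <|
      hm _ _ fun i hi => (shift_iterate_periodize_apply (by omega) x).symm
  have hsum := birkhoffSum_add_sub_birkhoffSum_add_le shift A hAC hclose m
  rw [birkhoffAverage, birkhoffAverage, smul_eq_mul, smul_eq_mul, ← sub_le_iff_le_add', ← mul_sub,
    inv_mul_le_iff₀ (by positivity)]
  push_cast at hsum ⊢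
  nlinarith [mul_nonneg (Nat.cast_nonneg m : (0 : ℝ) ≤ m) hε.le]

theorem integral_le_iSup_cons {A f : Bs → ℝ} (hA : Continuous A) (hf : Continuous f)
    {μ : Measure Bs} [IsProbabilityMeasure μ] (hμ : μ.map shift = μ) :
    ∫ x, A x ∂μ ≤ ⨆ p : Circ × Bs, (A (cons p.1 p.2) + f (cons p.1 p.2) - f p.2) := by
  have hint {h : Bs → ℝ} (hh : Continuous h) : Integrable h μ :=
    hh.integrable_of_hasCompactSupport (.of_compactSpace h)
  have hF : Continuous fun y => A y + f y - f (shift y) :=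
    (hA.add hf).sub (hf.comp continuous_shift)
  rw [iSup_cons_add_sub_eq,
    ← integral_add_sub_comp_of_map_eq continuous_shift.measurable hμ (hint hA) (hint hf)]
  calc ∫ y, (A y + f y - f (shift y)) ∂μ ≤ ∫ _, (⨆ y, (A y + f y - f (shift y))) ∂μ :=
        integral_mono (hint hF) (integrable_const _) fun y =>
          le_ciSup (isCompact_range hF).bddAbove y
    _ = ⨆ y, (A y + f y - f (shift y)) := by simp

/-- the duality formula
`m(A) = inf_{f continuous} sup_{(a,x)} [A(ax) + f(ax) − f(x)]`. -/
theorem duality_formula (A : Bs → ℝ) (hA : Continuous A) :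
    mval A = sInf {r : ℝ | ∃ f : Bs → ℝ, Continuous f ∧
      r = ⨆ p : Circ × Bs, (A (cons p.1 p.2) + f (cons p.1 p.2) - f p.2)} := by
  refine sSup_eq_sInf_of_forall_le_of_forall_exists_le_add ?_ fun ε hε => ?_
  · rintro _ ⟨μ, _, hμ, rfl⟩ _ ⟨f, hf, rfl⟩
    exact integral_le_iSup_cons hA hf hμ
  obtain ⟨n, hn, hperiodize⟩ := exists_birkhoffAverage_le_birkhoffAverage_periodize_add hA hε
  obtain ⟨x, hx⟩ := ((continuous_shift.birkhoffSum hA n).const_smul (n : ℝ)⁻¹).exists_forall_ge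
    (by simp [cocompact_eq_bot])
  let z := periodize n x
  refine ⟨_, ⟨orbitMeasure shift n z, isProbabilityMeasure_orbitMeasure shift hn z,
    map_orbitMeasure continuous_shift.measurable (isPeriodicPt_periodize n x), rfl⟩,
    _, ⟨birkhoffCorrector shift A n, continuous_shift.birkhoffCorrector hA n, rfl⟩, ?_⟩
  simp_rw [iSup_cons_add_sub_eq, add_birkhoffCorrector_sub_birkhoffCorrector_apply shift A hn,
    integral_orbitMeasure]
  exact (ciSup_le hx).trans (hperiodize x)
end
end
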